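/- Let G be a centerless group with the weakly Howson property. Then G × ℤ has the finitely generated fixed subgroup property of automorphisms if and only if G has the finitely generated fixed subgroup property of automorphisms and every group homomorphism α : G → ℤ has finitely generated kernel. -/

import Mathlib

/-- The fixed subgroup of an endomorphism of a group. -/
def fixedSubgroup {G : Type*} [Group G] (φ : G →* G) : Subgroup G where
  carrier := {g | φ g = g}
  one_mem' := map_one φ
  mul_mem' := by
    intro a b ha hb
    simp only [Set.mem_setOf_eq, map_mul] at *
    rw [ha, hb]
  inv_mem' := by
    intro a ha
    simp only [Set.mem_setOf_eq, map_inv] at *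
    rw [ha]

/-- A group has the weakly Howson property if the intersection of any two finitely
generated subgroups, one of which is normal, is finitely generated. -/
def WeaklyHowson (G : Type*) [Group G] : Prop :=
  ∀ H K : Subgroup G, H.Normal → H.FG → K.FG → (H ⊓ K).FG

/-!
If `G` is centerless, the centre of `G × ℤ` is `1 × ℤ`, so every automorphism `φ` of `G × ℤ`
has the shape `φ (g, n) = (ψ g, α g + τ n)` with `ψ ∈ Aut G`, `α : G → ℤ` and `τ : ℤ → ℤ`.
The fixed subgroup of `φ` meets the kernel of the projection to `G` in a subgroup of `ℤ`, so it
is finitely generated iff its projection `Fix ψ ∩ α⁻¹((1 - τ) ℤ)` is. If `(1 - τ) ℤ = 0` this is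
`Fix ψ ∩ ker α`, finitely generated by the weak Howson property; otherwise `α⁻¹((1 - τ) ℤ)` has
finite index in `G` and Schreier's lemma applies. Conversely, `ψ × id` and the shear
`(g, n) ↦ (g, α g + n)` have fixed subgroups `Fix ψ × ℤ` and `ker α × ℤ`.
-/

namespace Subgroup
variable {G G' N : Type*} [Group G] [Group G'] [Group N]

theorem FG.map {H : Subgroup G} (hH : H.FG) (f : G →* G') : (H.map f).FG := by
  obtain ⟨S, hS, hSfin⟩ := (fg_iff H).1 hH
  exact (fg_iff _).2 ⟨f '' S, by rw [← hS, MonoidHom.map_closure], hSfin.image f⟩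

theorem FG.of_map_of_inf_ker {f : G →* G'} {S : Subgroup G} (hmap : (S.map f).FG)
    (hker : (S ⊓ f.ker).FG) : S.FG := by
  obtain ⟨U, hUS, hUfin, hU⟩ : ∃ U ⊆ (S : Set G), U.Finite ∧ closure (f '' U) = S.map f := by
    obtain ⟨V, hV, hVfin⟩ := (fg_iff _).1 hmap
    exact Set.exists_subset_image_finite_and (p := fun W => closure W = S.map f) |>.1
      ⟨V, by rw [← coe_map, ← hV]; exact subset_closure, hVfin, hV⟩
  have hUle : closure U ≤ S := (closure_le S).2 hUS
  have hS : S = closure U ⊔ (S ⊓ f.ker) := by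
    refine le_antisymm (fun s hs => ?_) (sup_le hUle inf_le_left)
    obtain ⟨t, ht, hts⟩ : ∃ t ∈ closure U, f t = f s := by
      rw [← mem_map, MonoidHom.map_closure, hU]
      exact mem_map_of_mem f hs
    have hts' : t⁻¹ * s ∈ S ⊓ f.ker := mem_inf.2 ⟨mul_mem (inv_mem (hUle ht)) hs, by simp [hts]⟩
    simpa using mul_mem_sup ht hts'
  rw [hS]
  exact ((fg_iff _).2 ⟨U, rfl, hUfin⟩).sup hker

theorem FG.of_map_fst {S : Subgroup (G × N)} (hN : ∀ T : Subgroup N, T.FG)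
    (h : (S.map (MonoidHom.fst G N)).FG) : S.FG := by
  refine h.of_map_of_inf_ker (FG.of_map_of_inf_ker (f := MonoidHom.snd G N) (hN _) ?_)
  convert FG.bot
  rw [eq_bot_iff]
  rintro ⟨g, n⟩ ⟨⟨-, hg⟩, hn⟩
  simp_all [mem_prod]

theorem FG.inf_of_finiteIndex {K : Subgroup G} (hK : K.FG) (H : Subgroup G) [H.FiniteIndex] :
    (K ⊓ H).FG := by
  have := (Group.fg_iff_subgroup_fg K).2 hK
  rw [inf_comm, ← subgroupOf_map_subtype]
  exact ((Group.fg_iff_subgroup_fg _).1 inferInstance).map K.subtype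

theorem map_fst_prod (H : Subgroup G) (K : Subgroup N) :
    (H.prod K).map (MonoidHom.fst G N) = H := by
  ext g
  exact ⟨fun ⟨x, hx, hxg⟩ => hxg ▸ hx.1, fun hg => ⟨(g, 1), ⟨hg, one_mem K⟩, rfl⟩⟩

theorem FG.of_prod {H : Subgroup G} {K : Subgroup N} (h : (H.prod K).FG) : H.FG :=
  map_fst_prod H K ▸ h.map _

theorem fg_int (T : Subgroup (Multiplicative ℤ)) : T.FG := by
  obtain ⟨a, ha⟩ := Int.subgroup_cyclic (AddSubgroup.toSubgroup.symm T)
  rw [← AddSubgroup.toSubgroup.apply_symm_apply T, ← AddSubgroup.fg_iff_mul_fg, ha]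
  exact ⟨{a}, by simp⟩

theorem eq_bot_or_finiteIndex_int (D : Subgroup (Multiplicative ℤ)) :
    D = ⊥ ∨ D.FiniteIndex := by
  obtain ⟨a, ha⟩ := Int.subgroup_cyclic (AddSubgroup.toSubgroup.symm D)
  rw [← AddSubgroup.toSubgroup.apply_symm_apply D, ha, ← AddSubgroup.zmultiples_eq_closure]
  rcases eq_or_ne a 0 with rfl | ha0
  · left
    simp
  · right
    constructor
    rw [AddSubgroup.index_toSubgroup, Int.index_zmultiples]
    omega

instance finiteIndex_comap (f : G →* G') (H : Subgroup G') [H.FiniteIndex] :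
    (H.comap f).FiniteIndex :=
  ⟨fun h => FiniteIndex.index_ne_zero (index_eq_zero_of_relIndex_eq_zero (index_comap H f ▸ h))⟩

end Subgroup

@[simp]
theorem mem_fixedSubgroup {G : Type*} [Group G] {φ : G →* G} {g : G} :
    g ∈ fixedSubgroup φ ↔ φ g = g :=
  Iff.rfl

theorem fixedSubgroup_prodCongr_refl {G N : Type*} [Group G] [Group N] (ψ : G ≃* G) :
    fixedSubgroup (ψ.prodCongr (MulEquiv.refl N)).toMonoidHom
      = (fixedSubgroup ψ.toMonoidHom).prod ⊤ := by
  ext ⟨g, n⟩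
  change ((ψ g, n) : G × N) = (g, n) ↔ ψ g = g ∧ n ∈ ⊤
  simp

def MulEquiv.prodShear {G M : Type*} [Group G] [CommGroup M] (α : G →* M) : G × M ≃* G × M where
  toFun p := (p.1, α p.1 * p.2)
  invFun p := (p.1, (α p.1)⁻¹ * p.2)
  left_inv p := by simp
  right_inv p := by simp
  map_mul' p q := by
    ext
    · rfl
    · simp only [Prod.fst_mul, Prod.snd_mul, map_mul]
      exact mul_mul_mul_comm _ _ _ _

theorem fixedSubgroup_prodShear {G M : Type*} [Group G] [CommGroup M] (α : G →* M) :
    fixedSubgroup (MulEquiv.prodShear α).toMonoidHom = α.ker.prod ⊤ := by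
  ext ⟨g, n⟩
  simp [MulEquiv.prodShear, Subgroup.mem_prod, MonoidHom.mem_ker]

namespace MulEquiv
variable {G N : Type*} [Group G] [CommGroup N] (φ : G × N ≃* G × N)

def leftPart : G →* G := (MonoidHom.fst G N).comp (φ.toMonoidHom.comp (MonoidHom.inl G N))

def crossPart : G →* N := (MonoidHom.snd G N).comp (φ.toMonoidHom.comp (MonoidHom.inl G N))

def rightPart : N →* N := (MonoidHom.snd G N).comp (φ.toMonoidHom.comp (MonoidHom.inr G N))

theorem fst_apply_one_mk (hc : Subgroup.center G = ⊥) (n : N) : (φ (1, n)).1 = 1 := by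
  have hcen : φ (1, n) ∈ Set.center (G × N) := by
    refine MulEquivClass.apply_mem_center φ ?_
    rw [Set.center_prod]
    exact ⟨Set.one_mem_center, by simp [Set.center_eq_univ]⟩
  rw [Set.center_prod] at hcen
  have : (φ (1, n)).1 ∈ Subgroup.center G := hcen.1
  rwa [hc, Subgroup.mem_bot] at this

theorem apply_mk (hc : Subgroup.center G = ⊥) (g : G) (n : N) :
    φ (g, n) = (φ.leftPart g, φ.crossPart g * φ.rightPart n) := by
  have hgn : ((g, n) : G × N) = (g, 1) * (1, n) := by simp
  rw [hgn, map_mul]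
  ext
  · simp [leftPart, φ.fst_apply_one_mk hc]
  · simp [crossPart, rightPart]

theorem leftPart_symm_leftPart (hc : Subgroup.center G = ⊥) (g : G) :
    φ.symm.leftPart (φ.leftPart g) = g := by
  have h := φ.symm_apply_apply (g, 1)
  rw [φ.apply_mk hc, φ.symm.apply_mk hc] at h
  exact congrArg Prod.fst h

def leftAut (hc : Subgroup.center G = ⊥) : G ≃* G :=
  { φ.leftPart with
    invFun := φ.symm.leftPart
    left_inv := φ.leftPart_symm_leftPart hc
    right_inv g := by simpa using φ.symm.leftPart_symm_leftPart hc g }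

theorem map_fst_fixedSubgroup (hc : Subgroup.center G = ⊥) :
    (fixedSubgroup φ.toMonoidHom).map (MonoidHom.fst G N)
      = fixedSubgroup (φ.leftAut hc).toMonoidHom
        ⊓ (MonoidHom.id N / φ.rightPart).range.comap φ.crossPart := by
  ext g
  simp only [Subgroup.mem_map, Subgroup.mem_inf, Subgroup.mem_comap, MonoidHom.mem_range,
    mem_fixedSubgroup, Prod.exists, MonoidHom.coe_fst, coe_toMonoidHom, MonoidHom.div_apply,
    MonoidHom.id_apply, div_eq_iff_eq_mul]
  constructor
  · rintro ⟨g, n, hfix, rfl⟩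
    rw [φ.apply_mk hc, Prod.mk.injEq] at hfix
    exact ⟨hfix.1, n, hfix.2.symm⟩
  · rintro ⟨hg, n, hn⟩
    refine ⟨g, n, ?_, rfl⟩
    rw [φ.apply_mk hc, Prod.mk.injEq]
    exact ⟨hg, hn.symm⟩

end MulEquiv

theorem WeaklyHowson.fg_inf_comap {G : Type*} [Group G] (hw : WeaklyHowson G)
    (hker : ∀ α : G →* Multiplicative ℤ, α.ker.FG) {K : Subgroup G} (hK : K.FG)
    (α : G →* Multiplicative ℤ) (D : Subgroup (Multiplicative ℤ)) : (K ⊓ D.comap α).FG := by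
  rcases D.eq_bot_or_finiteIndex_int with rfl | hD
  · rw [MonoidHom.comap_bot, inf_comm]
    exact hw _ _ α.normal_ker (hker α) hK
  · exact hK.inf_of_finiteIndex _

theorem fixedSubgroup_fg_of_weaklyHowson {G : Type*} [Group G] (hc : Subgroup.center G = ⊥)
    (hw : WeaklyHowson G) (hfix : ∀ ψ : G ≃* G, (fixedSubgroup ψ.toMonoidHom).FG)
    (hker : ∀ α : G →* Multiplicative ℤ, α.ker.FG)
    (φ : (G × Multiplicative ℤ) ≃* (G × Multiplicative ℤ)) :
    (fixedSubgroup φ.toMonoidHom).FG := by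
  refine Subgroup.FG.of_map_fst Subgroup.fg_int ?_
  rw [φ.map_fst_fixedSubgroup hc]
  exact hw.fg_inf_comap hker (hfix _) _ _

/-- For a centerless group `G` with the weakly Howson property, `G × ℤ` has FGFP_a
iff `G` has FGFP_a and every homomorphism `α : G → ℤ` has finitely generated kernel. -/
theorem fgfp_prod_int_iff {G : Type*} [Group G]
    (hc : Subgroup.center G = ⊥) (hw : WeaklyHowson G) :
    (∀ φ : (G × Multiplicative ℤ) ≃* (G × Multiplicative ℤ),
        (fixedSubgroup φ.toMonoidHom).FG) ↔
      ((∀ ψ : G ≃* G, (fixedSubgroup ψ.toMonoidHom).FG) ∧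
        ∀ α : G →* Multiplicative ℤ, α.ker.FG) := by
  refine ⟨fun h => ⟨fun ψ => ?_, fun α => ?_⟩,
    fun ⟨hfix, hker⟩ => fixedSubgroup_fg_of_weaklyHowson hc hw hfix hker⟩
  · have := h (ψ.prodCongr (MulEquiv.refl _))
    rw [fixedSubgroup_prodCongr_refl] at this
    exact this.of_prod
  · have := h (MulEquiv.prodShear α)
    rw [fixedSubgroup_prodShear] at this
    exact this.of_prod
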